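/- arXiv:2211.05021 — 2 statements merged into one kernel-verified Lean document; each statement's English description precedes it below -/
import Mathlib

section
/- (Discrete Gronwall lemma) Let α > 0, let (w_n) and (u_n) be nonnegative real sequences with ∑_{j=1}^∞ w_j < ∞ and u_n ≤ K for all n for some real K. If u_n ≤ α + ∑_{j=n+1}^∞ w_j u_j for all n ∈ ℕ, then u_n ≤ α · exp(∑_{j=n+1}^∞ w_j) for all n ∈ ℕ. -/
theorem stmt4 (α K : ℝ) (hα : 0 < α) (w u : ℕ → ℝ)
    (hw : ∀ n, 0 ≤ w n) (hu : ∀ n, 0 ≤ u n)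
    (hws : Summable w) (hb : ∀ n, u n ≤ K)
    (hrec : ∀ n : ℕ, u n ≤ α + ∑' j : ℕ, w (n + 1 + j) * u (n + 1 + j)) :
    ∀ n : ℕ, u n ≤ α * Real.exp (∑' j : ℕ, w (n + 1 + j)) := by
  set g : ℕ → ℝ := fun j => w j * u j with hgdef
  have hg : Summable g :=
    Summable.of_nonneg_of_le (fun j => mul_nonneg (hw j) (hu j))
      (fun j => mul_le_mul_of_nonneg_left (hb j) (hw j)) (hws.mul_right K)
  have hgs : ∀ n : ℕ, Summable (fun j => g (n + 1 + j)) := fun n =>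
    hg.comp_injective (add_right_injective (n + 1))
  set v : ℕ → ℝ := fun n => α + ∑' j, g (n + 1 + j) with hvdef
  have hSnn : ∀ n, 0 ≤ ∑' j, g (n + 1 + j) := fun n =>
    tsum_nonneg (fun j => mul_nonneg (hw _) (hu _))
  have hvpos : ∀ n, 0 < v n := by
    intro n
    have := hSnn n
    simp only [hvdef]
    linarith
  have huv : ∀ n, u n ≤ v n := fun n => hrec n
  have hstep : ∀ n, v n ≤ Real.exp (w (n + 1)) * v (n + 1) := by
    intro n
    have hsplit : (∑' j, g (n + 1 + j)) = g (n + 1) + ∑' j, g (n + 2 + j) := by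
      rw [Summable.tsum_eq_zero_add (hgs n)]
      exact congrArg₂ (· + ·) (congrArg g (by omega))
        (tsum_congr fun j => congrArg g (by omega))
    have h1 : v n = v (n + 1) + g (n + 1) := by
      simp only [hvdef]
      rw [hsplit,
        show (∑' j, g (n + 1 + 1 + j)) = ∑' j, g (n + 2 + j) from
          tsum_congr fun j => congrArg g (by omega)]
      ring
    have h2 : v n ≤ (1 + w (n + 1)) * v (n + 1) := by
      rw [h1]
      have h3 := mul_le_mul_of_nonneg_left (huv (n + 1)) (hw (n + 1))
      have h4 : g (n + 1) = w (n + 1) * u (n + 1) := rfl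
      nlinarith [hvpos (n + 1)]
    calc v n ≤ (1 + w (n + 1)) * v (n + 1) := h2
      _ ≤ Real.exp (w (n + 1)) * v (n + 1) :=
        mul_le_mul_of_nonneg_right (by linarith [Real.add_one_le_exp (w (n + 1))])
          (hvpos (n + 1)).le
  have hiter : ∀ n m, v n ≤ Real.exp (∑ j ∈ Finset.range m, w (n + 1 + j)) * v (n + m) := by
    intro n m
    induction m with
    | zero => simp
    | succ m ih =>
      calc v n ≤ Real.exp (∑ j ∈ Finset.range m, w (n + 1 + j)) * v (n + m) := ih
        _ ≤ Real.exp (∑ j ∈ Finset.range m, w (n + 1 + j)) *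
            (Real.exp (w (n + m + 1)) * v (n + m + 1)) :=
          mul_le_mul_of_nonneg_left (hstep (n + m)) (Real.exp_pos _).le
        _ = Real.exp (∑ j ∈ Finset.range (m + 1), w (n + 1 + j)) * v (n + (m + 1)) := by
          rw [Finset.sum_range_succ, Real.exp_add,
            show w (n + 1 + m) = w (n + m + 1) from congrArg w (by omega),
            show n + (m + 1) = n + m + 1 from by omega]
          ring
  intro n
  have hwsum : Summable (fun j => w (n + 1 + j)) :=
    hws.comp_injective (add_right_injective (n + 1))
  have hT : Filter.Tendsto (fun m => ∑ j ∈ Finset.range m, w (n + 1 + j))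
      Filter.atTop (nhds (∑' j, w (n + 1 + j))) := hwsum.hasSum.tendsto_sum_nat
  have hS0 : Filter.Tendsto (fun m => ∑' j, g (n + m + 1 + j)) Filter.atTop (nhds 0) := by
    have h1 : Filter.Tendsto (fun i : ℕ => ∑' k, g (k + i)) Filter.atTop (nhds 0) :=
      tendsto_sum_nat_add g
    have h2 : Filter.Tendsto (fun m : ℕ => n + m + 1) Filter.atTop Filter.atTop :=
      Filter.tendsto_atTop_mono (fun m => by omega : ∀ m : ℕ, m ≤ n + m + 1)
        Filter.tendsto_id
    have h3 := h1.comp h2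
    refine h3.congr fun m => ?_
    show (∑' k, g (k + (n + m + 1))) = _
    exact tsum_congr fun k => congrArg g (by omega)
  have hv : Filter.Tendsto (fun m => v (n + m)) Filter.atTop (nhds α) := by
    have h5 : Filter.Tendsto (fun m => α + ∑' j, g (n + m + 1 + j)) Filter.atTop
        (nhds (α + 0)) := Filter.Tendsto.const_add α hS0
    rw [add_zero] at h5
    refine h5.congr fun m => ?_
    simp only [hvdef]
  have hlim : Filter.Tendsto
      (fun m => Real.exp (∑ j ∈ Finset.range m, w (n + 1 + j)) * v (n + m))
      Filter.atTop (nhds (Real.exp (∑' j, w (n + 1 + j)) * α)) :=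
    ((Real.continuous_exp.continuousAt.tendsto).comp hT).mul hv
  have hvn : v n ≤ Real.exp (∑' j, w (n + 1 + j)) * α :=
    le_of_tendsto_of_tendsto' tendsto_const_nhds hlim (fun m => hiter n m)
  calc u n ≤ v n := huv n
    _ ≤ Real.exp (∑' j, w (n + 1 + j)) * α := hvn
    _ = α * Real.exp (∑' j, w (n + 1 + j)) := mul_comm _ _
end

section
/- (Volterra equation, existence and uniqueness) Let 𝓜 = ℂ^{L×L}, let g ∈ ℓ^∞(ℕ, 𝓜), and let K(n,m) ∈ 𝓜 for n,m ∈ ℕ. Suppose there is M ∈ ℓ¹(ℕ, ℝ) with ‖K(n,m)‖ ≤ M(m) for all n,m. Then the Volterra equation f(n) = g(n) + ∑_{m=n+1}^∞ K(n,m) f(m) has a unique solution f ∈ ℓ^∞(ℕ, 𝓜). -/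
/-!
Write `tail M n = ∑_{m > n} M m`. Since `tail M (m - 1) = M m + tail M m`, Bernoulli's inequality
gives `(k + 1) M m (tail M m)^k ≤ tail M (m - 1)^(k + 1) - tail M m ^ (k + 1)`, and telescoping
shows by induction that the `k`-th iterate of `h ↦ g + ∑_{m > ·} K(·, m) h(m)` on bounded
sequences is Lipschitz with constant `(tail M 0)^k / k!`. Some iterate is therefore a
contraction, and Banach's fixed point theorem applies.
-/

open Filter Topology BoundedContinuousFunction Finset Function
open scoped Nat NNReal

theorem ContractingWith.existsUnique_isFixedPt_of_iterate {α : Type*} [MetricSpace α]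
    [Nonempty α] [CompleteSpace α] {f : α → α} {K : ℝ≥0} {n : ℕ}
    (hf : ContractingWith K f^[n]) : ∃! x, IsFixedPt f x :=
  ⟨_, hf.isFixedPt_fixedPoint_iterate, fun _ hx => hf.fixedPoint_unique (hx.iterate n)⟩

namespace Volterra

section Tail

variable {M : ℕ → ℝ}

noncomputable def tail (M : ℕ → ℝ) (n : ℕ) : ℝ := ∑' j, M (n + 1 + j)

lemma summable_shift (hM : Summable M) (n : ℕ) : Summable fun j => M (n + 1 + j) :=
  hM.comp_injective (add_right_injective (n + 1))

lemma tail_nonneg (hM0 : ∀ m, 0 ≤ M m) (n : ℕ) : 0 ≤ tail M n :=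
  tsum_nonneg fun _ => hM0 _

lemma tail_eq_add_tail_succ (hM : Summable M) (n : ℕ) :
    tail M n = M (n + 1) + tail M (n + 1) := by
  rw [tail, (summable_shift hM n).tsum_eq_zero_add, tail]
  congr 2 with j
  ring_nf

lemma tail_antitone (hM : Summable M) (hM0 : ∀ m, 0 ≤ M m) : Antitone (tail M) :=
  antitone_nat_of_succ_le fun n => by
    linarith [tail_eq_add_tail_succ hM n, hM0 (n + 1)]

lemma tsum_mul_tail_pow_le (hM : Summable M) (hM0 : ∀ m, 0 ≤ M m) (n k : ℕ) :
    ∑' j, M (n + 1 + j) * tail M (n + 1 + j) ^ k ≤ tail M n ^ (k + 1) / (k + 1) := by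
  have hstep (m : ℕ) : (k + 1) * (M (m + 1) * tail M (m + 1) ^ k)
      ≤ tail M m ^ (k + 1) - tail M (m + 1) ^ (k + 1) := by
    have bernoulli := pow_add_mul_le_add_pow (b := M (m + 1)) (tail_nonneg hM0 (m + 1))
      (by linarith [tail_nonneg hM0 (m + 1), hM0 (m + 1)]) (k + 1)
    rw [tail_eq_add_tail_succ hM m, add_comm (M _)]
    simp only [Nat.cast_add, Nat.cast_one, add_tsub_cancel_right] at bernoulli
    linarith
  refine Real.tsum_le_of_sum_range_le
    (fun _ => mul_nonneg (hM0 _) (pow_nonneg (tail_nonneg hM0 _) _)) fun N => ?_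
  have htelescope : (k + 1) * ∑ j ∈ range N, M (n + 1 + j) * tail M (n + 1 + j) ^ k
      ≤ tail M n ^ (k + 1) - tail M (n + N) ^ (k + 1) := by
    calc _ = ∑ j ∈ range N, (k + 1) * (M (n + j + 1) * tail M (n + j + 1) ^ k) := by
          rw [mul_sum]; simp only [add_right_comm n 1]
      _ ≤ ∑ j ∈ range N, (tail M (n + j) ^ (k + 1) - tail M (n + (j + 1)) ^ (k + 1)) :=
          sum_le_sum fun j _ => hstep (n + j)
      _ = _ := by rw [sum_range_sub' (fun j => tail M (n + j) ^ (k + 1)), add_zero]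
  rw [le_div_iff₀ (by positivity)]
  nlinarith [pow_nonneg (tail_nonneg hM0 (n + N)) (k + 1)]

end Tail

section Operator

variable {E : Type*} [NormedRing E] {K : ℕ → ℕ → E} {M : ℕ → ℝ}

lemma nonneg_of_norm_le (hK : ∀ n m, ‖K n m‖ ≤ M m) (m : ℕ) : 0 ≤ M m :=
  (norm_nonneg _).trans (hK 0 m)

noncomputable def kernelSum (K : ℕ → ℕ → E) (h : ℕ → E) (n : ℕ) : E :=
  ∑' j, K n (n + 1 + j) * h (n + 1 + j)

lemma norm_kernelSum_le (hK : ∀ n m, ‖K n m‖ ≤ M m) {h : ℕ → E} {b : ℕ → ℝ}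
    (hb : ∀ m, ‖h m‖ ≤ b m) {n : ℕ} (hMb : Summable fun j => M (n + 1 + j) * b (n + 1 + j)) :
    ‖kernelSum K h n‖ ≤ ∑' j, M (n + 1 + j) * b (n + 1 + j) :=
  tsum_of_norm_bounded hMb.hasSum fun _ =>
    (norm_mul_le _ _).trans <| mul_le_mul (hK _ _) (hb _) (norm_nonneg _)
      (nonneg_of_norm_le hK _)

lemma norm_kernelSum_le_of_bound (hM : Summable M) (hK : ∀ n m, ‖K n m‖ ≤ M m) {h : ℕ → E}
    {C : ℝ} (hC : ∀ m, ‖h m‖ ≤ C) (n : ℕ) : ‖kernelSum K h n‖ ≤ tail M 0 * C := by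
  have hM0 := nonneg_of_norm_le hK
  calc ‖kernelSum K h n‖ ≤ ∑' j, M (n + 1 + j) * C :=
        norm_kernelSum_le hK hC ((summable_shift hM n).mul_right C)
    _ = tail M n * C := tsum_mul_right
    _ ≤ tail M 0 * C := by
        gcongr
        · exact (norm_nonneg _).trans (hC 0)
        · exact tail_antitone hM hM0 (Nat.zero_le n)

lemma summable_kernel_mul [CompleteSpace E] (hM : Summable M) (hK : ∀ n m, ‖K n m‖ ≤ M m)
    {h : ℕ → E} {C : ℝ} (hC : ∀ m, ‖h m‖ ≤ C) (n : ℕ) :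
    Summable fun j => K n (n + 1 + j) * h (n + 1 + j) :=
  .of_norm_bounded ((summable_shift hM n).mul_right C) fun _ =>
    (norm_mul_le _ _).trans <| mul_le_mul (hK _ _) (hC _) (norm_nonneg _)
      (nonneg_of_norm_le hK _)

lemma kernelSum_sub [CompleteSpace E] (hM : Summable M) (hK : ∀ n m, ‖K n m‖ ≤ M m)
    {h h' : ℕ → E} {C C' : ℝ} (hC : ∀ m, ‖h m‖ ≤ C) (hC' : ∀ m, ‖h' m‖ ≤ C') (n : ℕ) :
    kernelSum K h n - kernelSum K h' n = kernelSum K (h - h') n := by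
  simp only [kernelSum, Pi.sub_apply, mul_sub]
  exact ((summable_kernel_mul hM hK hC n).tsum_sub (summable_kernel_mul hM hK hC' n)).symm

end Operator

section FixedPoint

variable {E : Type*} [NormedRing E] {K : ℕ → ℕ → E} {M : ℕ → ℝ}

noncomputable def op (hM : Summable M) (hK : ∀ n m, ‖K n m‖ ≤ M m) (g h : ℕ →ᵇ E) : ℕ →ᵇ E :=
  g + ofNormedAddCommGroupDiscrete (kernelSum K h) (tail M 0 * ‖h‖)
    (norm_kernelSum_le_of_bound hM hK h.norm_coe_le_norm)

variable [CompleteSpace E]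

lemma dist_op_iterate_apply_le (hM : Summable M) (hK : ∀ n m, ‖K n m‖ ≤ M m) (g : ℕ →ᵇ E)
    (k : ℕ) (h h' : ℕ →ᵇ E) (n : ℕ) :
    dist ((op hM hK g)^[k] h n) ((op hM hK g)^[k] h' n) ≤ tail M n ^ k / k ! * dist h h' := by
  have hM0 := nonneg_of_norm_le hK
  induction k generalizing n with
  | zero => simpa using dist_coe_le_dist n
  | succ k ih =>
    set D := dist h h'
    set u := (op hM hK g)^[k] h
    set u' := (op hM hK g)^[k] h'
    have hb (m : ℕ) : ‖(⇑u - ⇑u') m‖ ≤ tail M m ^ k / k ! * D := by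
      simpa [dist_eq_norm] using ih m
    have hsummable : Summable fun j => M (n + 1 + j) * (tail M (n + 1 + j) ^ k / k ! * D) := by
      refine .of_nonneg_of_le (fun _ => mul_nonneg (hM0 _) ((norm_nonneg _).trans (hb _)))
        (fun j => ?_) ((summable_shift hM n).mul_right (tail M 0 ^ k / k ! * D))
      gcongr
      · exact hM0 _
      · exact tail_nonneg hM0 _
      · exact tail_antitone hM hM0 (Nat.zero_le _)
    rw [iterate_succ_apply', iterate_succ_apply', dist_eq_norm]
    calc ‖op hM hK g u n - op hM hK g u' n‖ = ‖kernelSum K (⇑u - ⇑u') n‖ := by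
          simp only [op, BoundedContinuousFunction.coe_add, Pi.add_apply,
            coe_ofNormedAddCommGroupDiscrete, add_sub_add_left_eq_sub]
          rw [kernelSum_sub hM hK u.norm_coe_le_norm u'.norm_coe_le_norm]
      _ ≤ ∑' j, M (n + 1 + j) * (tail M (n + 1 + j) ^ k / k ! * D) :=
          norm_kernelSum_le hK hb hsummable
      _ = (∑' j, M (n + 1 + j) * tail M (n + 1 + j) ^ k) * (D / k !) := by
          rw [← tsum_mul_right]
          congr 1 with j
          ring
      _ ≤ tail M n ^ (k + 1) / (k + 1) * (D / k !) := by
          gcongr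
          exact tsum_mul_tail_pow_le hM hM0 n k
      _ = tail M n ^ (k + 1) / (k + 1)! * D := by
          rw [Nat.factorial_succ, Nat.cast_mul, Nat.cast_succ]
          field_simp

lemma existsUnique_isFixedPt_op (hM : Summable M) (hK : ∀ n m, ‖K n m‖ ≤ M m) (g : ℕ →ᵇ E) :
    ∃! f, IsFixedPt (op hM hK g) f := by
  have hM0 := nonneg_of_norm_le hK
  obtain ⟨k, hk⟩ := ((FloorSemiring.tendsto_pow_div_factorial_atTop (tail M 0)).eventually
    (gt_mem_nhds one_pos)).exists
  have hc0 : 0 ≤ tail M 0 ^ k / k ! :=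
    div_nonneg (pow_nonneg (tail_nonneg hM0 0) k) (Nat.cast_nonneg _)
  have hcontracting : ContractingWith ⟨tail M 0 ^ k / k !, hc0⟩ (op hM hK g)^[k] := by
    refine ⟨hk, LipschitzWith.of_dist_le_mul fun h h' =>
      (dist_le (mul_nonneg hc0 dist_nonneg)).2 fun n => ?_⟩
    refine (dist_op_iterate_apply_le hM hK g k h h' n).trans ?_
    gcongr
    · exact tail_nonneg hM0 n
    · exact tail_antitone hM hM0 (Nat.zero_le n)
  exact hcontracting.existsUnique_isFixedPt_of_iterate

end FixedPoint

end Volterra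

theorem stmt5 (L : ℕ)
    (g : ℕ → ((Fin L → ℂ) →L[ℂ] (Fin L → ℂ)))
    (hg : ∃ C, ∀ n, ‖g n‖ ≤ C)
    (K : ℕ → ℕ → ((Fin L → ℂ) →L[ℂ] (Fin L → ℂ)))
    (M : ℕ → ℝ) (hM : Summable M)
    (hK : ∀ n m, ‖K n m‖ ≤ M m) :
    ∃! f : {f : ℕ → ((Fin L → ℂ) →L[ℂ] (Fin L → ℂ)) // ∃ C, ∀ n, ‖f n‖ ≤ C},
      ∀ n : ℕ, f.1 n = g n + ∑' j : ℕ, K n (n + 1 + j) * f.1 (n + 1 + j) := by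
  obtain ⟨Cg, hCg⟩ := hg
  obtain ⟨f, hf, hunique⟩ :=
    Volterra.existsUnique_isFixedPt_op hM hK (ofNormedAddCommGroupDiscrete g Cg hCg)
  refine ⟨⟨f, ‖f‖, f.norm_coe_le_norm⟩, fun n => (DFunLike.congr_fun hf n).symm, ?_⟩
  rintro ⟨f', C', hC'⟩ hf'
  have hfixed : IsFixedPt (Volterra.op hM hK (ofNormedAddCommGroupDiscrete g Cg hCg))
      (ofNormedAddCommGroupDiscrete f' C' hC') :=
    BoundedContinuousFunction.ext fun n => (hf' n).symm
  exact Subtype.ext (congrArg DFunLike.coe (hunique _ hfixed))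
end
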